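/- Let n ≥ 1 and let μ_1, …, μ_n be real numbers with −1 < μ_k < 1 for every k. Then there exists a unique real number a_0 > −1/2 such that F(a_0) = 0, where F(a) = ∫_{−1/(1+2a)}^{1} x·∏_{k=1}^{n}(1 + μ_{k,a}·x) dx and μ_{k,a} = μ_k + a(1+μ_k). -/

import Mathlib

open Real MeasureTheory Filter Set

private noncomputable def reebF (n : ℕ) (μ : Fin n → ℝ) (a : ℝ) : ℝ :=
  ∫ x in (-1/(1+2*a))..1, x * ∏ k, (1 + (μ k + a * (1 + μ k)) * x)

private lemma reeb_fac_pos {a m x : ℝ} (ha : -1/2 < a) (hm1 : -1 < m) (hm2 : m < 1)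
    (hx1 : -1/(1+2*a) ≤ x) (hx2 : x ≤ 1) : 0 < 1 + (m + a*(1+m)) * x := by
  have h2a : (0:ℝ) < 1+2*a := by linarith
  have hx1' : -1 ≤ x*(1+2*a) := (div_le_iff₀ h2a).mp hx1
  rcases le_or_gt (m + a*(1+m)) 0 with h | h
  · nlinarith [mul_le_mul_of_nonpos_left hx2 h,
      mul_pos (by linarith : (0:ℝ) < 1+a) (by linarith : (0:ℝ) < 1+m)]
  · have h3 : 0 < (1 + (m + a*(1+m))*x)*(1+2*a) := by
      nlinarith [mul_le_mul_of_nonneg_left hx1' h.le,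
        mul_pos (by linarith : (0:ℝ) < 1+a) (by linarith : (0:ℝ) < 1-m)]
    nlinarith [h3]

private lemma reeb_cont (n : ℕ) (μ : Fin n → ℝ) (a : ℝ) :
    Continuous (fun x : ℝ => x * ∏ k, (1 + (μ k + a * (1 + μ k)) * x)) :=
  continuous_id.mul (continuous_finset_prod _ fun k _ => by fun_prop)

private lemma reeb_intble (n : ℕ) (μ : Fin n → ℝ) (a c d : ℝ) :
    IntervalIntegrable (fun x : ℝ => x * ∏ k, (1 + (μ k + a * (1 + μ k)) * x)) volume c d :=
  (reeb_cont n μ a).intervalIntegrable c d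

private lemma reeb_prod_pos {n : ℕ} {μ : Fin n → ℝ} (hμ : ∀ k, -1 < μ k ∧ μ k < 1)
    {a x : ℝ} (ha : -1/2 < a) (hx1 : -1/(1+2*a) ≤ x) (hx2 : x ≤ 1) :
    0 < ∏ k, (1 + (μ k + a * (1 + μ k)) * x) :=
  Finset.prod_pos fun k _ => reeb_fac_pos ha (hμ k).1 (hμ k).2 hx1 hx2

private lemma reeb_lower_lt (a : ℝ) (ha : -1/2 < a) : -1/(1+2*a) < 0 := by
  have : (0:ℝ) < 1+2*a := by linarith
  rw [neg_div]
  simp [div_pos, this]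

private lemma reebF_strictMono {n : ℕ} {μ : Fin n → ℝ} (hμ : ∀ k, -1 < μ k ∧ μ k < 1)
    {a b : ℝ} (ha : -1/2 < a) (hab : a < b) : reebF n μ a < reebF n μ b := by
  have hb : -1/2 < b := by linarith
  have h2a : (0:ℝ) < 1+2*a := by linarith
  have h2b : (0:ℝ) < 1+2*b := by linarith
  set ga := -1/(1+2*a) with hga_def
  set gb := -1/(1+2*b) with hgb_def
  have hgab : ga < gb := by
    rw [hga_def, hgb_def, neg_div, neg_div, neg_lt_neg_iff, div_lt_div_iff₀ h2b h2a]
    linarith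
  have hga0 : ga < 0 := reeb_lower_lt a ha
  have hgb0 : gb < 0 := reeb_lower_lt b hb
  -- monotone comparison on [gb, 1]
  have key1 : (∫ x in gb..1, x * ∏ k, (1 + (μ k + a * (1 + μ k)) * x))
      ≤ ∫ x in gb..1, x * ∏ k, (1 + (μ k + b * (1 + μ k)) * x) := by
    apply intervalIntegral.integral_mono_on (by linarith) (reeb_intble n μ a gb 1)
      (reeb_intble n μ b gb 1)
    intro x hx
    obtain ⟨hx1, hx2⟩ := hx
    rcases le_or_gt 0 x with hx0 | hx0
    · apply mul_le_mul_of_nonneg_left _ hx0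
      apply Finset.prod_le_prod
      · intro k _
        exact (reeb_fac_pos ha (hμ k).1 (hμ k).2 (by linarith) hx2).le
      · intro k _
        have : (0:ℝ) ≤ (b - a) * (1 + μ k) :=
          mul_nonneg (by linarith) (by linarith [(hμ k).1])
        nlinarith [mul_nonneg this hx0]
    · apply mul_le_mul_of_nonpos_left _ hx0.le
      apply Finset.prod_le_prod
      · intro k _
        exact (reeb_fac_pos hb (hμ k).1 (hμ k).2 hx1 hx2).le
      · intro k _
        have : (0:ℝ) ≤ (b - a) * (1 + μ k) :=
          mul_nonneg (by linarith) (by linarith [(hμ k).1])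
        nlinarith [mul_nonneg this (neg_nonneg.mpr hx0.le)]
  -- split F a
  have key2 : reebF n μ a = (∫ x in ga..gb, x * ∏ k, (1 + (μ k + a * (1 + μ k)) * x))
      + ∫ x in gb..1, x * ∏ k, (1 + (μ k + a * (1 + μ k)) * x) :=
    (intervalIntegral.integral_add_adjacent_intervals (reeb_intble n μ a ga gb)
      (reeb_intble n μ a gb 1)).symm
  -- negative part
  have key3 : (∫ x in ga..gb, x * ∏ k, (1 + (μ k + a * (1 + μ k)) * x)) < 0 := by
    have hpos : 0 < ∫ x in ga..gb, -(x * ∏ k, (1 + (μ k + a * (1 + μ k)) * x)) := by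
      apply intervalIntegral.intervalIntegral_pos_of_pos_on
        ((reeb_intble n μ a ga gb).neg)
      · intro x hx
        have hx1 : ga ≤ x := hx.1.le
        have hx2 : x < 0 := lt_trans hx.2 hgb0
        have := reeb_prod_pos hμ ha hx1 (by linarith)
        show 0 < -(x * ∏ k, (1 + (μ k + a * (1 + μ k)) * x))
        nlinarith
      · exact hgab
    rw [intervalIntegral.integral_neg] at hpos
    linarith
  rw [key2]
  show _ < reebF n μ b
  rw [reebF]
  linarith


private lemma reebF_pos_large {n : ℕ} {μ : Fin n → ℝ} (hμ : ∀ k, -1 < μ k ∧ μ k < 1) :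
    ∃ a₂ : ℝ, 1 ≤ a₂ ∧ 0 < reebF n μ a₂ := by
  have hpos : ∀ k, (0:ℝ) < 1 + μ k := fun k => by linarith [(hμ k).1]
  set a₂ : ℝ := 1 + ∑ k, 1/(1+μ k) with ha2_def
  have hsum : (0:ℝ) ≤ ∑ k, 1/(1+μ k) :=
    Finset.sum_nonneg fun k _ => le_of_lt (by have := hpos k; positivity)
  have ha2 : (1:ℝ) ≤ a₂ := by rw [ha2_def]; linarith
  have ha2' : -1/2 < a₂ := by linarith
  have hν : ∀ k, 0 ≤ μ k + a₂ * (1 + μ k) := by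
    intro k
    have h1 : 1/(1+μ k) ≤ ∑ j, 1/(1+μ j) :=
      Finset.single_le_sum (fun j _ => le_of_lt (one_div_pos.mpr (hpos j)))
        (Finset.mem_univ k)
    have h2 : 1/(1+μ k) ≤ a₂ := by linarith
    have h4 : 1 ≤ a₂ * (1+μ k) := by
      have h5 := mul_le_mul_of_nonneg_right h2 (hpos k).le
      rwa [one_div_mul_cancel (hpos k).ne'] at h5
    linarith [(hμ k).1]
  have h2a : (0:ℝ) < 1+2*a₂ := by linarith
  set t : ℝ := -1/(1+2*a₂) with ht_def
  have ht0 : t < 0 := reeb_lower_lt a₂ ha2'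
  have ht1 : -1 < t := by
    rw [ht_def, neg_div, neg_lt_neg_iff]
    rw [div_lt_one h2a]; linarith
  have hsplit : reebF n μ a₂ = (∫ x in t..0, x * ∏ k, (1 + (μ k + a₂*(1+μ k))*x))
      + ∫ x in (0:ℝ)..1, x * ∏ k, (1 + (μ k + a₂*(1+μ k))*x) :=
    (intervalIntegral.integral_add_adjacent_intervals (reeb_intble n μ a₂ t 0)
      (reeb_intble n μ a₂ 0 1)).symm
  have hI1 : (∫ x in t..0, (x:ℝ)) ≤ ∫ x in t..0, x * ∏ k, (1 + (μ k + a₂*(1+μ k))*x) := by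
    apply intervalIntegral.integral_mono_on ht0.le (Continuous.intervalIntegrable (by fun_prop) t 0)
      (reeb_intble n μ a₂ t 0)
    rintro x ⟨hx1, hx2⟩
    have hprod_pos : 0 < ∏ k, (1 + (μ k + a₂*(1+μ k))*x) :=
      reeb_prod_pos hμ ha2' hx1 (by linarith)
    have hprod_le : (∏ k, (1 + (μ k + a₂*(1+μ k))*x)) ≤ 1 := by
      apply Finset.prod_le_one
      · intro k _
        exact (reeb_fac_pos ha2' (hμ k).1 (hμ k).2 hx1 (by linarith)).le
      · intro k _
        nlinarith [mul_nonneg (hν k) (neg_nonneg.mpr hx2)]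
    nlinarith [mul_le_mul_of_nonpos_left hprod_le hx2]
  have hI2 : (∫ x in (0:ℝ)..1, (x:ℝ)) ≤ ∫ x in (0:ℝ)..1, x * ∏ k, (1 + (μ k + a₂*(1+μ k))*x) := by
    apply intervalIntegral.integral_mono_on zero_le_one
      (Continuous.intervalIntegrable (by fun_prop) 0 1) (reeb_intble n μ a₂ 0 1)
    rintro x ⟨hx1, hx2⟩
    have hprod_ge : (1:ℝ) ≤ ∏ k, (1 + (μ k + a₂*(1+μ k))*x) := by
      calc (1:ℝ) = ∏ _k : Fin n, (1:ℝ) := by simp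
        _ ≤ _ := Finset.prod_le_prod (fun k _ => zero_le_one)
            (fun k _ => by nlinarith [mul_nonneg (hν k) hx1])
    nlinarith [hprod_ge, hx1]
  have e1 : (∫ x in t..0, (x:ℝ)) = ((0:ℝ)^2 - t^2)/2 := integral_id
  have e2 : (∫ x in (0:ℝ)..1, (x:ℝ)) = ((1:ℝ)^2 - (0:ℝ)^2)/2 := integral_id
  refine ⟨a₂, ha2, ?_⟩
  rw [hsplit]
  nlinarith [hI1, hI2, e1, e2, ht0, ht1]

set_option maxHeartbeats 1000000 in
private lemma reebF_neg_small {n : ℕ} (hn : 1 ≤ n) {μ : Fin n → ℝ}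
    (hμ : ∀ k, -1 < μ k ∧ μ k < 1) :
    ∃ a₁ : ℝ, -1/2 < a₁ ∧ a₁ < 0 ∧ reebF n μ a₁ < 0 := by
  haveI : Nonempty (Fin n) := ⟨⟨0, hn⟩⟩
  have hpos : ∀ k, (0:ℝ) < 1 + μ k := fun k => by linarith [(hμ k).1]
  set δ₁ : ℝ := Finset.univ.inf' Finset.univ_nonempty (fun k => (1 - μ k)/(2*(1+μ k))) with hδ₁_def
  have hδ₁pos : 0 < δ₁ := by
    rw [hδ₁_def, Finset.lt_inf'_iff]
    intro k _
    have h1 := hpos k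
    have h2 : (0:ℝ) < 1 - μ k := by linarith [(hμ k).2]
    positivity
  set δ : ℝ := min δ₁ (1/10) with hδ_def
  have hδpos : 0 < δ := lt_min hδ₁pos (by norm_num)
  have hδle : δ ≤ 1/10 := min_le_right _ _
  set a₁ : ℝ := -1/2 + δ with ha1_def
  have ha1 : -1/2 < a₁ := by rw [ha1_def]; linarith
  have ha1' : a₁ < 0 := by rw [ha1_def]; linarith
  have h2a' : 1+2*a₁ = 2*δ := by rw [ha1_def]; ring
  have h2a : (0:ℝ) < 1+2*a₁ := by rw [h2a']; linarith
  -- all slopes nonpositive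
  have hν : ∀ k, μ k + a₁ * (1 + μ k) ≤ 0 := by
    intro k
    have h1 : δ₁ ≤ (1 - μ k)/(2*(1+μ k)) := Finset.inf'_le _ (Finset.mem_univ k)
    have h2 : δ ≤ (1 - μ k)/(2*(1+μ k)) := le_trans (min_le_left _ _) h1
    have h3 : δ * (2*(1+μ k)) ≤ 1 - μ k := by
      rw [← le_div_iff₀ (by have := hpos k; positivity)]
      exact h2
    nlinarith [hpos k]
  set l : ℝ := -1/(1+2*a₁) with hl_def
  have hl : l ≤ -5 := by
    rw [hl_def, h2a']
    rw [neg_div, neg_le_neg_iff, le_div_iff₀ (by linarith : (0:ℝ) < 2*δ)]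
    linarith
  have hl0 : l < 0 := by linarith
  -- split into three pieces
  have hsplit1 : reebF n μ a₁ = (∫ x in l..(-2:ℝ), x * ∏ k, (1 + (μ k + a₁*(1+μ k))*x))
      + ∫ x in (-2:ℝ)..1, x * ∏ k, (1 + (μ k + a₁*(1+μ k))*x) :=
    (intervalIntegral.integral_add_adjacent_intervals (reeb_intble n μ a₁ l (-2))
      (reeb_intble n μ a₁ (-2) 1)).symm
  have hsplit2 : (∫ x in (-2:ℝ)..1, x * ∏ k, (1 + (μ k + a₁*(1+μ k))*x))
      = (∫ x in (-2:ℝ)..0, x * ∏ k, (1 + (μ k + a₁*(1+μ k))*x))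
      + ∫ x in (0:ℝ)..1, x * ∏ k, (1 + (μ k + a₁*(1+μ k))*x) :=
    (intervalIntegral.integral_add_adjacent_intervals (reeb_intble n μ a₁ (-2) 0)
      (reeb_intble n μ a₁ 0 1)).symm
  have hB1 : (∫ x in l..(-2:ℝ), x * ∏ k, (1 + (μ k + a₁*(1+μ k))*x))
      ≤ ∫ x in l..(-2:ℝ), (x:ℝ) := by
    apply intervalIntegral.integral_mono_on (by linarith) (reeb_intble n μ a₁ l (-2))
      (Continuous.intervalIntegrable (by fun_prop) l (-2))
    rintro x ⟨hx1, hx2⟩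
    have hprod_ge : (1:ℝ) ≤ ∏ k, (1 + (μ k + a₁*(1+μ k))*x) := by
      calc (1:ℝ) = ∏ _k : Fin n, (1:ℝ) := by simp
        _ ≤ _ := Finset.prod_le_prod (fun k _ => zero_le_one)
            (fun k _ => by nlinarith [mul_nonneg (neg_nonneg.mpr (hν k)) (by linarith : (0:ℝ) ≤ -x)])
    nlinarith [mul_le_mul_of_nonpos_left hprod_ge (by linarith : x ≤ 0)]
  have hB2 : (∫ x in (-2:ℝ)..0, x * ∏ k, (1 + (μ k + a₁*(1+μ k))*x)) ≤ 0 := by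
    have : (∫ x in (-2:ℝ)..0, x * ∏ k, (1 + (μ k + a₁*(1+μ k))*x))
        ≤ ∫ x in (-2:ℝ)..0, (0:ℝ) := by
      apply intervalIntegral.integral_mono_on (by norm_num) (reeb_intble n μ a₁ (-2) 0)
        (intervalIntegrable_const)
      rintro x ⟨hx1, hx2⟩
      have hprod_pos : 0 < ∏ k, (1 + (μ k + a₁*(1+μ k))*x) :=
        reeb_prod_pos hμ ha1 (by rw [← hl_def]; linarith) (by linarith)
      nlinarith
    simpa using this
  have hB3 : (∫ x in (0:ℝ)..1, x * ∏ k, (1 + (μ k + a₁*(1+μ k))*x))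
      ≤ ∫ x in (0:ℝ)..1, (x:ℝ) := by
    apply intervalIntegral.integral_mono_on zero_le_one (reeb_intble n μ a₁ 0 1)
      (Continuous.intervalIntegrable (by fun_prop) 0 1)
    rintro x ⟨hx1, hx2⟩
    have hprod_le : (∏ k, (1 + (μ k + a₁*(1+μ k))*x)) ≤ 1 := by
      apply Finset.prod_le_one
      · intro k _
        exact (reeb_fac_pos ha1 (hμ k).1 (hμ k).2 (by rw [← hl_def]; linarith) hx2).le
      · intro k _
        nlinarith [mul_nonneg (neg_nonneg.mpr (hν k)) hx1]
    nlinarith [hprod_le, hx1]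
  have e1 : (∫ x in l..(-2:ℝ), (x:ℝ)) = ((-2:ℝ)^2 - l^2)/2 := integral_id
  have e2 : (∫ x in (0:ℝ)..1, (x:ℝ)) = ((1:ℝ)^2 - (0:ℝ)^2)/2 := integral_id
  refine ⟨a₁, ha1, ha1', ?_⟩
  rw [hsplit1, hsplit2]
  nlinarith [hB1, hB2, hB3, e1, e2, hl]

private lemma reebF_contOn {n : ℕ} (μ : Fin n → ℝ) {a₁ : ℝ} (h : -1/2 < a₁) :
    ContinuousOn (reebF n μ) (Ici a₁) := by
  have hs : Continuous (fun a : ℝ => -1/(1+2*max a a₁)) := by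
    apply Continuous.div continuous_const (by fun_prop)
    intro a
    have h1 := le_max_right a a₁
    have h2 : (0:ℝ) < 1+2*max a a₁ := by linarith
    exact h2.ne'
  have hf : Continuous (Function.uncurry
      fun (a x : ℝ) => x * ∏ k, (1 + (μ k + a*(1+μ k))*x)) := by
    show Continuous fun p : ℝ × ℝ => p.2 * ∏ k, (1 + (μ k + p.1*(1+μ k))*p.2)
    exact (continuous_snd).mul (continuous_finset_prod _ fun k _ => by fun_prop)
  have hG : Continuous (fun a : ℝ => ∫ x in (1:ℝ)..(-1/(1+2*max a a₁)),
      x * ∏ k, (1 + (μ k + a*(1+μ k))*x)) :=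
    intervalIntegral.continuous_parametric_intervalIntegral_of_continuous hf hs
  apply (hG.neg.continuousOn).congr
  intro a ha
  show reebF n μ a = -_
  beta_reduce
  rw [max_eq_left (ha : a₁ ≤ a), reebF]
  exact intervalIntegral.integral_symm 1 _

theorem unique_reeb_parameter (n : ℕ) (hn : 1 ≤ n) (μ : Fin n → ℝ)
    (hμ : ∀ k, -1 < μ k ∧ μ k < 1) :
    ∃! a₀ : ℝ, -1/2 < a₀ ∧
      (∫ x in (-1/(1+2*a₀))..1, x * ∏ k, (1 + (μ k + a₀ * (1 + μ k)) * x)) = 0 := by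
  obtain ⟨a₁, ha1, ha1', hF1⟩ := reebF_neg_small hn hμ
  obtain ⟨a₂, ha2, hF2⟩ := reebF_pos_large hμ
  have h12 : a₁ < a₂ := by linarith
  have hcont : ContinuousOn (reebF n μ) (Icc a₁ a₂) :=
    (reebF_contOn μ ha1).mono Icc_subset_Ici_self
  have h0mem : (0:ℝ) ∈ Icc (reebF n μ a₁) (reebF n μ a₂) := ⟨hF1.le, hF2.le⟩
  obtain ⟨a₀, ha₀mem, ha₀⟩ := intermediate_value_Icc h12.le hcont h0mem
  have ha₀' : -1/2 < a₀ := by linarith [ha₀mem.1]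
  refine ⟨a₀, ⟨ha₀', ha₀⟩, ?_⟩
  intro b hb
  have hb1 : -1/2 < b := hb.1
  have hb2 : reebF n μ b = 0 := hb.2
  rcases lt_trichotomy b a₀ with h | h | h
  · exfalso
    have hlt := reebF_strictMono hμ hb1 h
    rw [hb2] at hlt
    rw [show reebF n μ a₀ = 0 from ha₀] at hlt
    exact lt_irrefl 0 hlt
  · exact h
  · exfalso
    have hlt := reebF_strictMono hμ ha₀' h
    rw [hb2] at hlt
    rw [show reebF n μ a₀ = 0 from ha₀] at hlt
    exact lt_irrefl 0 hlt
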